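/- arXiv:1112.5844 — 4 statements merged into one kernel-verified Lean document; each statement's English description precedes it below -/
import Mathlib

section
/- The interior of the probability simplex with the Hilbert projective metric is a complete metric space. -/
/-- The Hilbert projective metric on vectors with strictly positive
components: `ρ_H(x,y) = max_i ln(y_i/x_i) + max_i ln(x_i/y_i)`. -/
noncomputable def rhoH {N : ℕ} [NeZero N] (x y : Fin N → ℝ) : ℝ :=
  Finset.univ.sup' Finset.univ_nonempty (fun i => Real.log (y i / x i)) +
    Finset.univ.sup' Finset.univ_nonempty (fun i => Real.log (x i / y i))

lemma tendsto_sup'_zero {N : ℕ} [NeZero N] (g : Fin N → ℕ → ℝ)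
    (hg : ∀ i, Filter.Tendsto (g i) Filter.atTop (nhds 0)) :
    Filter.Tendsto (fun n => Finset.univ.sup' Finset.univ_nonempty (fun i => g i n))
      Filter.atTop (nhds 0) := by
  rw [NormedAddCommGroup.tendsto_nhds_zero]
  intro ε hε
  have h : ∀ᶠ n in Filter.atTop, ∀ i, |g i n| < ε := by
    rw [Filter.eventually_all]
    intro i
    have := (NormedAddCommGroup.tendsto_nhds_zero.1 (hg i)) ε hε
    simpa using this
  filter_upwards [h] with n hn
  obtain ⟨i₀, -⟩ := (Finset.univ_nonempty (α := Fin N)).exists_mem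
  rw [Real.norm_eq_abs, abs_lt]
  constructor
  · calc -ε < g i₀ n := (abs_lt.1 (hn i₀)).1
      _ ≤ _ := Finset.le_sup' (fun j => g j n) (Finset.mem_univ i₀)
  · exact (Finset.sup'_lt_iff _).2 fun i _ => (abs_lt.1 (hn i)).2

/-- The interior of the probability simplex with the Hilbert
projective metric is a complete metric space: every sequence in
`int Σ_N` that is Cauchy with respect to `ρ_H` converges (in `ρ_H`) to a
point of `int Σ_N`. -/
theorem simplex_interior_complete
    (N : ℕ) [NeZero N]
    (p : ℕ → Fin N → ℝ)
    (hp : ∀ n, (∑ i, p n i) = 1 ∧ ∀ i, 0 < p n i)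
    (hcauchy : ∀ ε : ℝ, 0 < ε → ∃ K : ℕ, ∀ m n : ℕ, K ≤ m → K ≤ n →
      rhoH (p m) (p n) < ε) :
    ∃ q : Fin N → ℝ, ((∑ i, q i) = 1 ∧ ∀ i, 0 < q i) ∧
      Filter.Tendsto (fun n => rhoH (p n) q) Filter.atTop (nhds 0) := by
  have hpos : ∀ n i, 0 < p n i := fun n => (hp n).2
  -- each sup' term is nonnegative
  have hnonneg : ∀ m n, (0:ℝ) ≤ Finset.univ.sup' Finset.univ_nonempty
      (fun i => Real.log (p n i / p m i)) := by
    intro m n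
    obtain ⟨i, hi⟩ : ∃ i, p m i ≤ p n i := by
      by_contra h
      push_neg at h
      have := Finset.sum_lt_sum_of_nonempty Finset.univ_nonempty (fun i _ => h i)
      rw [(hp n).1, (hp m).1] at this
      exact lt_irrefl 1 this
    calc (0:ℝ) ≤ Real.log (p n i / p m i) :=
          Real.log_nonneg ((one_le_div (hpos m i)).2 hi)
      _ ≤ _ := Finset.le_sup' (fun j => Real.log (p n j / p m j)) (Finset.mem_univ i)
  -- log differences bounded by rhoH
  have key : ∀ m n i, |Real.log (p n i) - Real.log (p m i)| ≤ rhoH (p m) (p n) := by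
    intro m n i
    rw [abs_sub_le_iff]
    constructor
    · calc Real.log (p n i) - Real.log (p m i)
          = Real.log (p n i / p m i) := (Real.log_div (hpos n i).ne' (hpos m i).ne').symm
        _ ≤ Finset.univ.sup' Finset.univ_nonempty (fun j => Real.log (p n j / p m j)) :=
            Finset.le_sup' (fun j => Real.log (p n j / p m j)) (Finset.mem_univ i)
        _ ≤ rhoH (p m) (p n) := le_add_of_nonneg_right (hnonneg n m)
    · calc Real.log (p m i) - Real.log (p n i)
          = Real.log (p m i / p n i) := (Real.log_div (hpos m i).ne' (hpos n i).ne').symm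
        _ ≤ Finset.univ.sup' Finset.univ_nonempty (fun j => Real.log (p m j / p n j)) :=
            Finset.le_sup' (fun j => Real.log (p m j / p n j)) (Finset.mem_univ i)
        _ ≤ rhoH (p m) (p n) := le_add_of_nonneg_left (hnonneg m n)
  -- each coordinate log sequence is Cauchy
  have hC : ∀ i, CauchySeq (fun n => Real.log (p n i)) := by
    intro i
    rw [Metric.cauchySeq_iff]
    intro ε hε
    obtain ⟨K, hK⟩ := hcauchy ε hε
    exact ⟨K, fun m hm n hn => lt_of_le_of_lt (by
      simpa [Real.dist_eq] using key n m i) (hK n m hn hm)⟩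
  have hL := fun i => cauchySeq_tendsto_of_complete (hC i)
  choose L hL using hL
  refine ⟨fun i => Real.exp (L i), ⟨?_, fun i => Real.exp_pos _⟩, ?_⟩
  · -- sum = 1
    have h1 : ∀ i, Filter.Tendsto (fun n => p n i) Filter.atTop (nhds (Real.exp (L i))) := by
      intro i
      have := (Real.continuous_exp.tendsto (L i)).comp (hL i)
      simpa [Function.comp_def, Real.exp_log (hpos _ i)] using this
    have hsum : Filter.Tendsto (fun n => ∑ i, p n i) Filter.atTop
        (nhds (∑ i, Real.exp (L i))) := tendsto_finset_sum _ fun i _ => h1 i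
    have hsum1 : Filter.Tendsto (fun n => ∑ i, p n i) Filter.atTop (nhds 1) := by
      simp only [fun n => (hp n).1]; exact tendsto_const_nhds
    simpa using tendsto_nhds_unique hsum hsum1
  · -- rhoH tends to 0
    have hlog : ∀ i, Filter.Tendsto (fun n => Real.log (p n i)) Filter.atTop (nhds (L i)) :=
      hL
    have t1 : Filter.Tendsto (fun n => Finset.univ.sup' Finset.univ_nonempty
        (fun i => Real.log (Real.exp (L i) / p n i))) Filter.atTop (nhds 0) := by
      apply tendsto_sup'_zero
      intro i
      have : (fun n => Real.log (Real.exp (L i) / p n i))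
          = fun n => L i - Real.log (p n i) := by
        funext n
        rw [Real.log_div (Real.exp_pos _).ne' (hpos n i).ne', Real.log_exp]
      rw [this]
      simpa using (tendsto_const_nhds (x := L i)).sub (hlog i)
    have t2 : Filter.Tendsto (fun n => Finset.univ.sup' Finset.univ_nonempty
        (fun i => Real.log (p n i / Real.exp (L i)))) Filter.atTop (nhds 0) := by
      apply tendsto_sup'_zero
      intro i
      have : (fun n => Real.log (p n i / Real.exp (L i)))
          = fun n => Real.log (p n i) - L i := by
        funext n
        rw [Real.log_div (hpos n i).ne' (Real.exp_pos _).ne', Real.log_exp]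
      rw [this]
      simpa using (hlog i).sub (tendsto_const_nhds (x := L i))
    have := t1.add t2
    simpa [rhoH] using this
end

section
/- Birkhoff's contraction theorem: if L is an N×N matrix with all entries strictly positive and δ(L) = sup{ρ_H(Lx, Ly) : x, y with strictly positive components} is its projective diameter, then for all x, y with strictly positive components, ρ_H(Lx, Ly) ≤ tanh(δ(L)/4) · ρ_H(x,y), where tanh(δ(L)/4) < 1 when δ(L) < ∞. -/
open Real Finset Matrix

theorem Real.tanh_le_tanh {a b : ℝ} (h : a ≤ b) : tanh a ≤ tanh b := by
  have mem : ∀ c, tanh c ∈ Set.Ioo (-1) 1 := fun c => ⟨neg_one_lt_tanh c, tanh_lt_one c⟩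
  rwa [← artanh_le_artanh_iff (mem a) (mem b), artanh_tanh, artanh_tanh]

theorem Real.tanh_half_log {r : ℝ} (hr : 0 < r) : tanh (log r / 2) = (r - 1) / (r + 1) := by
  have hsq : exp (log r / 2) ^ 2 = r := by
    rw [← exp_nat_mul, Nat.cast_ofNat, mul_div_cancel₀ _ two_ne_zero, exp_log hr]
  rw [tanh_eq, exp_neg]
  conv_rhs => rw [← hsq]
  field_simp

theorem tanh_quarter_log_odds_sub {s S : ℝ} (hs : 0 < s) (hs1 : s < 1) (hS : 0 < S) (hS1 : S < 1) :
    tanh ((log ((1 - s) / s) - log ((1 - S) / S)) / 4) =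
      (√(S * (1 - s)) - √(s * (1 - S))) / (√(S * (1 - s)) + √(s * (1 - S))) := by
  have hA : 0 < √(S * (1 - s)) := sqrt_pos.2 (by nlinarith)
  have hB : 0 < √(s * (1 - S)) := sqrt_pos.2 (by nlinarith)
  have hlog : log ((1 - s) / s) - log ((1 - S) / S) =
      log ((√(S * (1 - s)) / √(s * (1 - S))) ^ 2) := by
    rw [← log_div (by positivity) (by positivity), div_pow, sq_sqrt (by nlinarith),
      sq_sqrt (by nlinarith)]
    congr 1
    field_simp
  rw [hlog, log_pow, Nat.cast_ofNat, show (4 : ℝ) = 2 * 2 by norm_num,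
    mul_div_mul_left _ _ two_ne_zero, tanh_half_log (by positivity)]
  field_simp

theorem div_affine_sub_div_affine_le {s S α b : ℝ} (hs : 0 < s) (hsS : s ≤ S) (hS1 : S < 1)
    (hα : 0 < α) (hb : 0 < b) :
    S / (α + (b - α) * S) - s / (α + (b - α) * s) ≤
      (√(S * (1 - s)) - √(s * (1 - S))) / (√(S * (1 - s)) + √(s * (1 - S))) / b := by
  set A := √(S * (1 - s))
  set B := √(s * (1 - S))
  have hA2 : A ^ 2 = S * (1 - s) := sq_sqrt (by nlinarith)
  have hB2 : B ^ 2 = s * (1 - S) := sq_sqrt (by nlinarith)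
  have hBA : B ≤ A := sqrt_le_sqrt (by nlinarith)
  have hS : 0 < S := hs.trans_le hsS
  have hP : 0 < α + (b - α) * S := by nlinarith
  have hQ : 0 < α + (b - α) * s := by nlinarith
  set X := α ^ 2 * ((1 - S) * (1 - s))
  set Y := b ^ 2 * (S * s)
  -- AM-GM: `α b A B` is the geometric mean of `X` and `Y`
  have hamgm : 2 * (α * b * (A * B)) ≤ X + Y := by
    have hX : 0 ≤ X := mul_nonneg (sq_nonneg α) (mul_nonneg (by linarith) (by linarith))
    have hY : 0 ≤ Y := by positivity
    refine (pow_le_pow_iff_left₀ (by positivity) (add_nonneg hX hY) two_ne_zero).1 ?_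
    have hAB : (2 * (α * b * (A * B))) ^ 2 = 4 * X * Y := by
      rw [mul_pow, mul_pow, mul_pow, mul_pow, hA2, hB2]; ring
    nlinarith [sq_nonneg (X - Y)]
  have hSs : S - s = (A - B) * (A + B) := by linear_combination hB2 - hA2
  have hPQ : (α + (b - α) * S) * (α + (b - α) * s) =
      α * b * (A + B) ^ 2 + (X + Y - 2 * (α * b * (A * B))) := by
    linear_combination (-(α * b)) * (hA2 + hB2)
  rw [div_sub_div _ _ hP.ne' hQ.ne', div_div, div_le_div_iff₀ (by positivity) (by positivity),
    show S * (α + (b - α) * s) - (α + (b - α) * S) * s = α * (S - s) by ring, hSs, hPQ]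
  nlinarith [mul_nonneg (sub_nonneg.2 hBA) (sub_nonneg.2 hamgm)]

theorem log_affine_sub_log_affine_le {s S α β : ℝ} (hs : 0 < s) (hsS : s ≤ S) (hS1 : S < 1)
    (hα : 0 < α) (hαβ : α ≤ β) :
    log (α + (β - α) * S) - log (α + (β - α) * s) ≤
      tanh ((log ((1 - s) / s) - log ((1 - S) / S)) / 4) * (log β - log α) := by
  rw [tanh_quarter_log_odds_sub hs (hsS.trans_lt hS1) (hs.trans_le hsS) hS1]
  set θ := (√(S * (1 - s)) - √(s * (1 - S))) / (√(S * (1 - s)) + √(s * (1 - S)))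
  have hderiv : ∀ b ∈ Set.Ioi (0 : ℝ), HasDerivAt
      (fun b => θ * log b - log (α + (b - α) * S) + log (α + (b - α) * s))
      (θ * b⁻¹ - S / (α + (b - α) * S) + s / (α + (b - α) * s)) b := by
    intro b (hb : 0 < b)
    have haff : ∀ c, HasDerivAt (fun b => α + (b - α) * c) c b := fun c => by
      simpa using ((hasDerivAt_id b).sub_const α).mul_const c |>.const_add α
    exact (((hasDerivAt_log hb.ne').const_mul θ).sub ((haff S).log (by nlinarith))).add
      ((haff s).log (by nlinarith))
  have hmono := monotoneOn_of_hasDerivWithinAt_nonneg (convex_Ioi 0)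
    (fun b hb => (hderiv b hb).continuousAt.continuousWithinAt)
    (fun b hb => (hderiv b (interior_subset hb)).hasDerivWithinAt)
    (fun b hb => by
      rw [← div_eq_mul_inv]
      linarith [div_affine_sub_div_affine_le hs hsS hS1 hα (interior_subset hb : 0 < b)])
  have := hmono hα (hα.trans_le hαβ) hαβ
  simp only [sub_self, zero_mul, add_zero] at this
  linarith

section

variable {N : ℕ} [NeZero N]

theorem rhoH_eq_log_sub_log {x y g : Fin N → ℝ} (hx : ∀ i, 0 < x i) (hy : ∀ i, y i = g i * x i)
    {i₀ i₁ : Fin N} (hg : 0 < g i₀) (h₀ : ∀ i, g i₀ ≤ g i) (h₁ : ∀ i, g i ≤ g i₁) :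
    rhoH x y = log (g i₁) - log (g i₀) := by
  have hg' : ∀ i, 0 < g i := fun i => hg.trans_le (h₀ i)
  have hyx : ∀ i, y i / x i = g i := fun i => by rw [hy, mul_div_cancel_right₀ _ (hx i).ne']
  have hxy : ∀ i, x i / y i = (g i)⁻¹ := fun i => by rw [← hyx, inv_div]
  have hmax : univ.sup' univ_nonempty (fun i => log (y i / x i)) = log (g i₁) :=
    le_antisymm (sup'_le _ _ fun i _ => by rw [hyx]; exact log_le_log (hg' i) (h₁ i))
      (by simpa only [hyx] using le_sup' (fun i => log (y i / x i)) (mem_univ i₁))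
  have hmin : univ.sup' univ_nonempty (fun i => log (x i / y i)) = -log (g i₀) := by
    simp only [hxy, log_inv]
    exact le_antisymm (sup'_le _ _ fun i _ => neg_le_neg (log_le_log hg (h₀ i)))
      (le_sup' (fun i => -log (g i)) (mem_univ i₀))
  rw [rhoH, hmax, hmin, sub_eq_add_neg]

theorem rhoH_smul_self {x : Fin N → ℝ} (hx : ∀ i, 0 < x i) {c : ℝ} (hc : 0 < c) :
    rhoH x (c • x) = 0 := by
  simpa using rhoH_eq_log_sub_log (y := c • x) (g := fun _ => c) (i₀ := 0) (i₁ := 0) hx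
    (fun _ => rfl) hc (fun _ => le_rfl) (fun _ => le_rfl)

theorem rhoH_le_log_add_log {x y : Fin N → ℝ} (hx : ∀ i, 0 < x i) (hy : ∀ i, 0 < y i) {a b : ℝ}
    (ha : ∀ i, y i / x i ≤ a) (hb : ∀ i, x i / y i ≤ b) : rhoH x y ≤ log a + log b :=
  add_le_add (sup'_le _ _ fun i _ => log_le_log (div_pos (hy i) (hx i)) (ha i))
    (sup'_le _ _ fun i _ => log_le_log (div_pos (hx i) (hy i)) (hb i))

theorem continuousAt_rhoH {x y : Fin N → ℝ} (hx : ∀ i, 0 < x i) (hy : ∀ i, 0 < y i) :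
    ContinuousAt (fun p : (Fin N → ℝ) × (Fin N → ℝ) => rhoH p.1 p.2) (x, y) := by
  unfold rhoH
  refine (ContinuousAt.finset_sup'_apply _ fun i _ => ?_).add
    (ContinuousAt.finset_sup'_apply _ fun i _ => ?_)
  · exact .log (by fun_prop (disch := exact (hx i).ne')) (div_pos (hy i) (hx i)).ne'
  · exact .log (by fun_prop (disch := exact (hy i).ne')) (div_pos (hx i) (hy i)).ne'

end

section

variable {ι κ : Type*} [Fintype κ] {L : Matrix ι κ ℝ}

theorem mulVec_apply_pos (hL : ∀ i j, 0 < L i j) {u : κ → ℝ} (hu : 0 ≤ u) {k : κ} (hk : 0 < u k)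
    (i : ι) : 0 < (L *ᵥ u) i :=
  sum_pos' (fun j _ => mul_nonneg (hL i j).le (hu j)) ⟨k, mem_univ k, mul_pos (hL i k) hk⟩

theorem mul_sum_le_mulVec_apply {m : ℝ} (hm : ∀ i j, m ≤ L i j) {z : κ → ℝ} (hz : 0 ≤ z) (i : ι) :
    m * ∑ k, z k ≤ (L *ᵥ z) i := by
  rw [mul_sum]
  exact sum_le_sum fun k _ => mul_le_mul_of_nonneg_right (hm i k) (hz k)

theorem mulVec_apply_le_mul_sum {M : ℝ} (hM : ∀ i j, L i j ≤ M) {z : κ → ℝ} (hz : 0 ≤ z) (i : ι) :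
    (L *ᵥ z) i ≤ M * ∑ k, z k := by
  rw [mul_sum]
  exact sum_le_sum fun k _ => mul_le_mul_of_nonneg_right (hM i k) (hz k)

end

section

variable {N : ℕ} [NeZero N] {L : Matrix (Fin N) (Fin N) ℝ}

noncomputable def projectiveDiam (L : Matrix (Fin N) (Fin N) ℝ) : ℝ :=
  sSup {d : ℝ | ∃ x y : Fin N → ℝ,
    (∀ i, 0 < x i) ∧ (∀ i, 0 < y i) ∧ d = rhoH (L.mulVec x) (L.mulVec y)}

theorem bddAbove_rhoH_mulVec (hL : ∀ i j, 0 < L i j) :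
    BddAbove {d : ℝ | ∃ x y : Fin N → ℝ,
      (∀ i, 0 < x i) ∧ (∀ i, 0 < y i) ∧ d = rhoH (L.mulVec x) (L.mulVec y)} := by
  obtain ⟨p, hp⟩ := Finite.exists_min fun p : Fin N × Fin N => L p.1 p.2
  obtain ⟨q, hq⟩ := Finite.exists_max fun p : Fin N × Fin N => L p.1 p.2
  set m := L p.1 p.2
  set M := L q.1 q.2
  have hm : 0 < m := hL p.1 p.2
  have hM : 0 < M := hm.trans_le (hq p)
  have ratio_le : ∀ {z w : Fin N → ℝ}, (∀ i, 0 < z i) → (∀ i, 0 < w i) → ∀ i,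
      (L *ᵥ w) i / (L *ᵥ z) i ≤ M / m * ((∑ k, w k) / ∑ k, z k) := by
    intro z w hz hw i
    have hsz : 0 < ∑ k, z k := sum_pos (fun k _ => hz k) univ_nonempty
    have hsw : 0 < ∑ k, w k := sum_pos (fun k _ => hw k) univ_nonempty
    rw [div_le_iff₀ (mulVec_apply_pos hL (fun k => (hz k).le) (hz 0) i)]
    calc (L *ᵥ w) i
        ≤ M * ∑ k, w k := mulVec_apply_le_mul_sum (fun i j => hq (i, j)) (fun k => (hw k).le) i
      _ = M / m * ((∑ k, w k) / ∑ k, z k) * (m * ∑ k, z k) := by field_simp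
      _ ≤ M / m * ((∑ k, w k) / ∑ k, z k) * (L *ᵥ z) i := by
        gcongr
        exact mul_sum_le_mulVec_apply (fun i j => hp (i, j)) (fun k => (hz k).le) i
  refine ⟨log ((M / m) ^ 2), ?_⟩
  rintro _ ⟨x, y, hx, hy, rfl⟩
  have hsx : 0 < ∑ k, x k := sum_pos (fun k _ => hx k) univ_nonempty
  have hsy : 0 < ∑ k, y k := sum_pos (fun k _ => hy k) univ_nonempty
  calc rhoH (L *ᵥ x) (L *ᵥ y)
      ≤ log (M / m * ((∑ k, y k) / ∑ k, x k)) + log (M / m * ((∑ k, x k) / ∑ k, y k)) :=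
        rhoH_le_log_add_log (fun i => mulVec_apply_pos hL (fun k => (hx k).le) (hx 0) i)
          (fun i => mulVec_apply_pos hL (fun k => (hy k).le) (hy 0) i) (ratio_le hx hy)
          (ratio_le hy hx)
    _ = log ((M / m) ^ 2) := by
        rw [← log_mul (by positivity) (by positivity)]
        congr 1
        field_simp

theorem rhoH_mulVec_le_projectiveDiam (hL : ∀ i j, 0 < L i j) {u v : Fin N → ℝ} (hu : 0 ≤ u)
    (hv : 0 ≤ v) (hLu : ∀ i, 0 < (L *ᵥ u) i) (hLv : ∀ i, 0 < (L *ᵥ v) i) :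
    rhoH (L *ᵥ u) (L *ᵥ v) ≤ projectiveDiam L := by
  -- `u` and `v` may vanish somewhere: approximate them by the positive vectors `u + ε`, `v + ε`
  have hcont : ContinuousAt (fun ε : ℝ => rhoH (L *ᵥ (u + ε • 1)) (L *ᵥ (v + ε • 1))) 0 := by
    refine ContinuousAt.comp (f := fun ε : ℝ => (L *ᵥ (u + ε • 1), L *ᵥ (v + ε • 1)))
      (g := fun p => rhoH p.1 p.2) ?_ (by fun_prop)
    simpa using continuousAt_rhoH hLu hLv
  have hpos : ∀ {w : Fin N → ℝ}, 0 ≤ w → ∀ {ε : ℝ}, 0 < ε → ∀ i, 0 < (w + ε • 1) i :=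
    fun hw _ hε i => by simpa using add_pos_of_nonneg_of_pos (hw i) hε
  refine le_of_tendsto
    (by simpa using hcont.tendsto.mono_left (nhdsWithin_le_nhds (s := Set.Ioi 0))) ?_
  filter_upwards [self_mem_nhdsWithin] with ε (hε : 0 < ε)
  exact le_csSup (bddAbove_rhoH_mulVec hL) ⟨_, _, hpos hu hε, hpos hv hε, rfl⟩

theorem rhoH_mulVec_affine_le (hL : ∀ i j, 0 < L i j) {x u : Fin N → ℝ} (hu : 0 ≤ u)
    (hux : u ≤ x) (hLu : ∀ i, 0 < (L *ᵥ u) i) (hLxu : ∀ i, 0 < (L *ᵥ (x - u)) i) {α β : ℝ}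
    (hα : 0 < α) (hαβ : α ≤ β) :
    rhoH (L *ᵥ x) (L *ᵥ (α • x + (β - α) • u)) ≤
      tanh (projectiveDiam L / 4) * (log β - log α) := by
  have hLx : ∀ i, 0 < (L *ᵥ x) i := fun i => by
    simpa [mulVec_sub] using add_pos (hLu i) (hLxu i)
  set σ : Fin N → ℝ := fun i => (L *ᵥ u) i / (L *ᵥ x) i
  have hσ : ∀ i, 0 < σ i := fun i => div_pos (hLu i) (hLx i)
  have hσ1 : ∀ i, σ i < 1 := fun i => (div_lt_one (hLx i)).2 (by simpa [mulVec_sub] using hLxu i)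
  have hLu_eq : ∀ i, (L *ᵥ u) i = σ i * (L *ᵥ x) i :=
    fun i => (div_mul_cancel₀ _ (hLx i).ne').symm
  obtain ⟨j₀, hj₀⟩ := Finite.exists_min σ
  obtain ⟨j₁, hj₁⟩ := Finite.exists_max σ
  have hρ : rhoH (L *ᵥ x) (L *ᵥ (α • x + (β - α) • u)) =
      log (α + (β - α) * σ j₁) - log (α + (β - α) * σ j₀) := by
    refine rhoH_eq_log_sub_log (g := fun i => α + (β - α) * σ i) hLx (fun i => ?_)
      (by nlinarith [hσ j₀]) (fun i => by nlinarith [hj₀ i]) (fun i => by nlinarith [hj₁ i])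
    simp only [mulVec_add, mulVec_smul, Pi.add_apply, Pi.smul_apply, smul_eq_mul, hLu_eq]
    ring
  have hodds : ∀ {a b : ℝ}, 0 < a → a ≤ b → (1 - b) / b ≤ (1 - a) / a := fun ha hab => by
    rw [div_le_div_iff₀ (ha.trans_le hab) ha]; nlinarith
  have hρ_odds : rhoH (L *ᵥ u) (L *ᵥ (x - u)) =
      log ((1 - σ j₀) / σ j₀) - log ((1 - σ j₁) / σ j₁) := by
    refine rhoH_eq_log_sub_log (g := fun i => (1 - σ i) / σ i) hLu (fun i => ?_)
      (div_pos (by linarith [hσ1 j₁]) (hσ j₁)) (fun i => hodds (hσ i) (hj₁ i))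
      (fun i => hodds (hσ j₀) (hj₀ i))
    rw [hLu_eq, mulVec_sub, Pi.sub_apply, hLu_eq]
    field_simp [(hσ i).ne']
  have hδ := hρ_odds ▸ rhoH_mulVec_le_projectiveDiam hL hu (sub_nonneg.2 hux) hLu hLxu
  rw [hρ]
  calc _ ≤ tanh ((log ((1 - σ j₀) / σ j₀) - log ((1 - σ j₁) / σ j₁)) / 4) * (log β - log α) :=
        log_affine_sub_log_affine_le (hσ j₀) (hj₀ j₁) (hσ1 j₁) hα hαβ
    _ ≤ tanh (projectiveDiam L / 4) * (log β - log α) :=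
        mul_le_mul_of_nonneg_right (tanh_le_tanh (by linarith))
          (sub_nonneg.2 (log_le_log hα hαβ))

theorem rhoH_mulVec_le_tanh_mul (hL : ∀ i j, 0 < L i j) {x y : Fin N → ℝ} (hx : ∀ i, 0 < x i)
    (hy : ∀ i, 0 < y i) : rhoH (L *ᵥ x) (L *ᵥ y) ≤ tanh (projectiveDiam L / 4) * rhoH x y := by
  obtain ⟨i₀, hi₀⟩ := Finite.exists_min fun k => y k / x k
  obtain ⟨i₁, hi₁⟩ := Finite.exists_max fun k => y k / x k
  set α := y i₀ / x i₀
  set β := y i₁ / x i₁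
  have hα : 0 < α := div_pos (hy i₀) (hx i₀)
  have hyx : ∀ k, y k = y k / x k * x k := fun k => (div_mul_cancel₀ _ (hx k).ne').symm
  rw [rhoH_eq_log_sub_log hx hyx hα hi₀ hi₁]
  rcases (hi₀ i₁).eq_or_lt with hαβ | hαβ
  · have hy_eq : y = α • x := funext fun k => by
      rw [hyx k, le_antisymm (hαβ ▸ hi₁ k) (hi₀ k)]; rfl
    rw [← hαβ, sub_self, mul_zero, hy_eq, mulVec_smul,
      rhoH_smul_self (fun i => mulVec_apply_pos hL (fun k => (hx k).le) (hx 0) i) hα]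
  · -- `0 ≤ u ≤ x`, with equality on the left at `i₀` and on the right at `i₁`
    set u := (β - α)⁻¹ • (y - α • x)
    have hy_eq : y = α • x + (β - α) • u := by
      rw [smul_smul, mul_inv_cancel₀ (sub_pos.2 hαβ).ne', one_smul, add_sub_cancel]
    have hu_apply : ∀ k, u k = (y k / x k - α) / (β - α) * x k := fun k => by
      simp only [u, Pi.smul_apply, Pi.sub_apply, smul_eq_mul]
      field_simp [(hx k).ne']
    have hu : 0 ≤ u := fun k => by
      rw [hu_apply]
      exact mul_nonneg (div_nonneg (sub_nonneg.2 (hi₀ k)) (sub_pos.2 hαβ).le) (hx k).le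
    have hux : u ≤ x := fun k => by
      rw [hu_apply]
      exact mul_le_of_le_one_left (hx k).le
        ((div_le_one (sub_pos.2 hαβ)).2 (sub_le_sub_right (hi₁ k) α))
    have hLu := mulVec_apply_pos hL hu (k := i₁)
      (by rw [hu_apply, div_self (sub_pos.2 hαβ).ne', one_mul]; exact hx i₁)
    have hLxu := mulVec_apply_pos hL (sub_nonneg.2 hux) (k := i₀)
      (by rw [Pi.sub_apply, hu_apply, sub_self, zero_div, zero_mul, sub_zero]; exact hx i₀)
    conv_lhs => rw [hy_eq]
    exact rhoH_mulVec_affine_le hL hu hux hLu hLxu hα hαβ.le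

end

/-- Birkhoff: for a strictly positive matrix `L` with
projective diameter `δ(L)`, one has
`ρ_H(Lx, Ly) ≤ tanh(δ(L)/4) · ρ_H(x,y)` for all strictly positive `x, y`,
and `tanh(δ(L)/4) < 1`. -/
theorem birkhoff_contraction
    (N : ℕ) [NeZero N] (L : Matrix (Fin N) (Fin N) ℝ)
    (hL : ∀ i j, 0 < L i j) :
    let δ : ℝ := sSup {d : ℝ | ∃ x y : Fin N → ℝ,
      (∀ i, 0 < x i) ∧ (∀ i, 0 < y i) ∧ d = rhoH (L.mulVec x) (L.mulVec y)}
    (∀ x y : Fin N → ℝ, (∀ i, 0 < x i) → (∀ i, 0 < y i) →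
      rhoH (L.mulVec x) (L.mulVec y) ≤ Real.tanh (δ / 4) * rhoH x y) ∧
    Real.tanh (δ / 4) < 1 :=
  ⟨fun _ _ hx hy => rhoH_mulVec_le_tanh_mul hL hx hy, tanh_lt_one _⟩
end

section
/- A strictly positive N×N matrix L has finite projective diameter: δ(L) = sup{ρ_H(Lx, Ly) : x, y ∈ int K_+^N} < ∞, with the explicit bound δ(L) ≤ 2 max_{i,j,k,l} ln( (L[i,k] L[j,l]) / (L[j,k] L[i,l]) ). -/
open Finset

theorem Finset.exists_sum_mul_le_div_mul_sum {ι : Type*} {s : Finset ι} (hs : s.Nonempty)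
    {a b x : ι → ℝ} (hb : ∀ k ∈ s, 0 < b k) (hx : ∀ k ∈ s, 0 ≤ x k) :
    ∃ k ∈ s, ∑ m ∈ s, a m * x m ≤ a k / b k * ∑ m ∈ s, b m * x m := by
  obtain ⟨k, hk, hmax⟩ := s.exists_max_image (fun m => a m / b m) hs
  refine ⟨k, hk, ?_⟩
  rw [mul_sum]
  refine sum_le_sum fun m hm => ?_
  calc a m * x m = a m / b m * (b m * x m) := by field_simp [(hb m hm).ne']
    _ ≤ a k / b k * (b m * x m) :=
      mul_le_mul_of_nonneg_right (hmax m hm) (mul_nonneg (hb m hm).le (hx m hm))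

namespace Matrix

variable {m n : Type*} [Fintype n]

noncomputable def maxLogCrossRatio [Fintype m] [Nonempty m] [Nonempty n]
    (L : Matrix m n ℝ) : ℝ :=
  univ.sup' univ_nonempty fun p : m × m × n × n =>
    Real.log (L p.1 p.2.2.1 * L p.2.1 p.2.2.2 / (L p.2.1 p.2.2.1 * L p.1 p.2.2.2))

section maxLogCrossRatio

variable [Fintype m] [Nonempty m] [Nonempty n]

theorem log_crossRatio_le_maxLogCrossRatio (L : Matrix m n ℝ) (i j : m) (k l : n) :
    Real.log (L i k * L j l / (L j k * L i l)) ≤ L.maxLogCrossRatio :=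
  le_sup' (fun p : m × m × n × n =>
    Real.log (L p.1 p.2.2.1 * L p.2.1 p.2.2.2 / (L p.2.1 p.2.2.1 * L p.1 p.2.2.2)))
    (mem_univ (i, j, k, l))

theorem maxLogCrossRatio_nonneg (L : Matrix m n ℝ) : 0 ≤ L.maxLogCrossRatio := by
  obtain ⟨i⟩ := ‹Nonempty m›
  obtain ⟨k⟩ := ‹Nonempty n›
  simpa using L.log_crossRatio_le_maxLogCrossRatio i i k k

end maxLogCrossRatio

variable [Nonempty n] {L : Matrix m n ℝ} {x : n → ℝ}

theorem mulVec_pos (hL : ∀ i k, 0 < L i k) (hx : ∀ k, 0 < x k) (i : m) : 0 < (L *ᵥ x) i :=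
  sum_pos (fun k _ => mul_pos (hL i k) (hx k)) univ_nonempty

theorem exists_mulVec_div_mulVec_le (hL : ∀ i k, 0 < L i k) (hx : ∀ k, 0 < x k) (i j : m) :
    ∃ k, (L *ᵥ x) i / (L *ᵥ x) j ≤ L i k / L j k := by
  obtain ⟨k, -, hk⟩ := exists_sum_mul_le_div_mul_sum univ_nonempty (a := L i) (b := L j)
    (fun k _ => hL j k) (fun k _ => (hx k).le)
  exact ⟨k, (div_le_iff₀ (mulVec_pos hL hx j)).2 hk⟩

end Matrix

theorem rhoH_le_of_forall_le {N : ℕ} [NeZero N] {u v : Fin N → ℝ} {C : ℝ}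
    (h : ∀ i j, Real.log (v i / u i) + Real.log (u j / v j) ≤ C) : rhoH u v ≤ C := by
  obtain ⟨i, -, hi⟩ := exists_mem_eq_sup' univ_nonempty fun i => Real.log (v i / u i)
  obtain ⟨j, -, hj⟩ := exists_mem_eq_sup' univ_nonempty fun j => Real.log (u j / v j)
  rw [rhoH, hi, hj]
  exact h i j

open Matrix in
theorem rhoH_mulVec_le_maxLogCrossRatio {N : ℕ} [NeZero N] {n : Type*} [Fintype n] [Nonempty n]
    {L : Matrix (Fin N) n ℝ} (hL : ∀ i k, 0 < L i k) {x y : n → ℝ}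
    (hx : ∀ k, 0 < x k) (hy : ∀ k, 0 < y k) :
    rhoH (L *ᵥ x) (L *ᵥ y) ≤ L.maxLogCrossRatio := by
  refine rhoH_le_of_forall_le fun i j => ?_
  obtain ⟨k, hk⟩ := exists_mulVec_div_mulVec_le hL hy i j
  obtain ⟨l, hl⟩ := exists_mulVec_div_mulVec_le hL hx j i
  have hLx := mulVec_pos hL hx
  have hLy := mulVec_pos hL hy
  calc Real.log ((L *ᵥ y) i / (L *ᵥ x) i) + Real.log ((L *ᵥ x) j / (L *ᵥ y) j)
      = Real.log ((L *ᵥ y) i / (L *ᵥ y) j * ((L *ᵥ x) j / (L *ᵥ x) i)) := by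
        rw [← Real.log_mul (div_pos (hLy i) (hLx i)).ne' (div_pos (hLx j) (hLy j)).ne']
        congr 1
        ring
    _ ≤ Real.log (L i k / L j k * (L j l / L i l)) :=
        Real.log_le_log (mul_pos (div_pos (hLy i) (hLy j)) (div_pos (hLx j) (hLx i))) <|
          mul_le_mul hk hl (div_pos (hLx j) (hLx i)).le (div_pos (hL i k) (hL j k)).le
    _ = Real.log (L i k * L j l / (L j k * L i l)) := by rw [mul_div_mul_comm]
    _ ≤ L.maxLogCrossRatio := L.log_crossRatio_le_maxLogCrossRatio i j k l

/-- A strictly positive `N×N` matrix has finite projective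
diameter, with the explicit bound
`δ(L) ≤ 2 max_{i,j,k,l} ln( L i k · L j l / (L j k · L i l) )`. -/
theorem positive_matrix_finite_projective_diameter
    (N : ℕ) [NeZero N] (L : Matrix (Fin N) (Fin N) ℝ)
    (hL : ∀ i j, 0 < L i j) :
    let S : Set ℝ := {d : ℝ | ∃ x y : Fin N → ℝ,
      (∀ i, 0 < x i) ∧ (∀ i, 0 < y i) ∧ d = rhoH (L.mulVec x) (L.mulVec y)}
    BddAbove S ∧
    sSup S ≤ 2 * Finset.univ.sup' Finset.univ_nonempty
      (fun p : Fin N × Fin N × Fin N × Fin N =>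
        Real.log (L p.1 p.2.2.1 * L p.2.1 p.2.2.2 /
          (L p.2.1 p.2.2.1 * L p.1 p.2.2.2))) := by
  intro S
  change BddAbove S ∧ sSup S ≤ 2 * L.maxLogCrossRatio
  have hS : ∀ d ∈ S, d ≤ L.maxLogCrossRatio := by
    rintro _ ⟨x, y, hx, hy, rfl⟩
    exact rhoH_mulVec_le_maxLogCrossRatio hL hx hy
  have h0 := L.maxLogCrossRatio_nonneg
  exact ⟨⟨_, hS⟩, Real.sSup_le (fun d hd => (hS d hd).trans (by linarith)) (by linarith)⟩
end

section
/- Let α ≤ q_i(k) ≤ β with α > 0 for all band entries of a sequence of tridiagonal generators Q_k, let 0 < Δ < 1/(2β), set γ = min{Δα, 1 − 2Δβ} > 0, and let L_k = I_N + Δ Q_k. Then the product L_{N-2} ⋯ L_1 L_0 of any N−1 such matrices has every entry at least γ^{N-1}; in particular it maps the probability simplex Σ_N into Σ_N(γ) = {p ∈ Σ_N : p_i ≥ γ^{N-1}}. -/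
/-!
Each Euler step `1 + Δ • Q` of a tridiagonal generator is column-stochastic, and its entries on
the three central diagonals are at least `γ`: off the diagonal they are `Δ q ≥ Δ α`, on it
`1 - Δ (q + q') ≥ 1 - 2 Δ β`. For nonnegative matrices, a lower bound `a` on the band of width `m`
of `A` and a lower bound `b` on the band of width `n` of `B` give the lower bound `a b` on the band
of width `m + n` of `A * B`, because every `(i, j)` in the wider band has an intermediate index `k`
within `m` of `i` and within `n` of `j`. After `N - 1` steps the band is the whole matrix, and the
column-stochastic product sends a probability vector to a convex combination of its columns.
-/

open Finset

namespace Matrix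

variable {R : Type*} {N : ℕ}

def BandBoundedBelow [LE R] (A : Matrix (Fin N) (Fin N) R) (n : ℕ) (c : R) : Prop :=
  ∀ i j : Fin N, (i : ℕ) ≤ j + n → (j : ℕ) ≤ i + n → c ≤ A i j

theorem BandBoundedBelow.le_apply [LE R] {A : Matrix (Fin N) (Fin N) R} {c : R}
    (h : BandBoundedBelow A (N - 1) c) (i j : Fin N) : c ≤ A i j :=
  h i j (by omega) (by omega)

theorem bandBoundedBelow_one_zero [Zero R] [One R] [Preorder R] :
    BandBoundedBelow (1 : Matrix (Fin N) (Fin N) R) 0 1 := by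
  intro i j hij hji
  obtain rfl : i = j := Fin.ext (by omega)
  exact (one_apply_eq i).ge

section OrderedSemiring

variable [Semiring R] [PartialOrder R] [IsOrderedRing R]

theorem BandBoundedBelow.mul {A B : Matrix (Fin N) (Fin N) R} {m n : ℕ} {a b : R}
    (hA : BandBoundedBelow A m a) (hB : BandBoundedBelow B n b)
    (hA0 : ∀ i j, 0 ≤ A i j) (hB0 : ∀ i j, 0 ≤ B i j) (hb : 0 ≤ b) :
    BandBoundedBelow (A * B) (m + n) (a * b) := by
  intro i j hij hji
  obtain ⟨k, hik, hki, hkj, hjk⟩ : ∃ k : Fin N,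
      (i : ℕ) ≤ k + m ∧ (k : ℕ) ≤ i + m ∧ (k : ℕ) ≤ j + n ∧ (j : ℕ) ≤ k + n := by
    by_cases h : (i : ℕ) ≤ j
    · exact ⟨⟨min (i + m) j, by omega⟩, by simp only; omega⟩
    · exact ⟨⟨max (i - m) j, by omega⟩, by simp only; omega⟩
  calc a * b ≤ A i k * B k j := mul_le_mul (hA i k hik hki) (hB k j hkj hjk) hb (hA0 i k)
    _ ≤ (A * B) i j := by
      rw [mul_apply]
      exact single_le_sum (fun l _ => mul_nonneg (hA0 i l) (hB0 l j)) (mem_univ k)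

theorem list_prod_apply_nonneg {n : Type*} [Fintype n] [DecidableEq n] {l : List (Matrix n n R)}
    (hl : ∀ A ∈ l, ∀ i j, 0 ≤ A i j) (i j : n) : 0 ≤ l.prod i j := by
  induction l generalizing i j with
  | nil =>
    rw [List.prod_nil, one_apply]
    split_ifs
    exacts [zero_le_one, le_rfl]
  | cons A l ih =>
    rw [List.prod_cons, mul_apply]
    exact sum_nonneg fun k _ =>
      mul_nonneg (hl A List.mem_cons_self i k) (ih (fun B hB => hl B (.tail A hB)) k j)

theorem BandBoundedBelow.list_prod {l : List (Matrix (Fin N) (Fin N) R)} {c : R} (hc : 0 ≤ c)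
    (hl : ∀ A ∈ l, (∀ i j, 0 ≤ A i j) ∧ BandBoundedBelow A 1 c) :
    BandBoundedBelow l.prod l.length (c ^ l.length) := by
  induction l with
  | nil =>
    rw [List.prod_nil, List.length_nil, pow_zero]
    exact bandBoundedBelow_one_zero
  | cons A l ih =>
    have hA := hl A List.mem_cons_self
    have htail : ∀ B ∈ l, (∀ i j, 0 ≤ B i j) ∧ BandBoundedBelow B 1 c :=
      fun B hB => hl B (.tail A hB)
    rw [List.prod_cons, List.length_cons, pow_succ', Nat.add_comm]
    exact hA.2.mul (ih htail) hA.1 (list_prod_apply_nonneg fun B hB => (htail B hB).1)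
      (pow_nonneg hc _)

theorem le_mulVec_apply {m n : Type*} [Fintype n] {M : Matrix m n R} {x : n → R} {c : R} {i : m}
    (hM : ∀ j, c ≤ M i j) (hx : ∀ j, 0 ≤ x j) (hx1 : ∑ j, x j = 1) : c ≤ (M *ᵥ x) i :=
  calc c = ∑ j, c * x j := by rw [← mul_sum, hx1, mul_one]
    _ ≤ ∑ j, M i j * x j := sum_le_sum fun j _ => mul_le_mul_of_nonneg_right (hM j) (hx j)

end OrderedSemiring

theorem one_add_smul_mem_colStochastic {n : Type*} [Fintype n] [DecidableEq n] [Ring R]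
    [PartialOrder R] [IsOrderedRing R] {Q : Matrix n n R} {Δ : R} (hΔ : 0 ≤ Δ)
    (hoff : ∀ i j, i ≠ j → 0 ≤ Q i j) (hdiag : ∀ j, 0 ≤ 1 + Δ * Q j j)
    (hsum : ∀ j, ∑ i, Q i j = 0) : 1 + Δ • Q ∈ colStochastic R n := by
  refine mem_colStochastic_iff_sum.2 ⟨fun i j => ?_, fun j => ?_⟩
  · rw [add_apply, smul_apply, smul_eq_mul]
    rcases eq_or_ne i j with rfl | hij
    · rw [one_apply_eq]
      exact hdiag i
    · rw [one_apply_ne hij, zero_add]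
      exact mul_nonneg hΔ (hoff i j hij)
  · simp only [add_apply, smul_apply, smul_eq_mul, sum_add_distrib, ← mul_sum, hsum, mul_zero,
      add_zero, one_apply, sum_ite_eq', mem_univ, if_true]

end Matrix

open Matrix

section Tridiagonal

variable {R : Type*} {N : ℕ}

theorem Fin.sum_univ_ite_val_eq [AddCommMonoid R] (m : ℕ) (c : R) :
    ∑ i : Fin N, (if (i : ℕ) = m then c else 0) = if m < N then c else 0 := by
  rw [Fin.sum_univ_eq_sum_range (fun i => if i = m then c else 0), sum_ite_eq']
  simp

theorem Fin.sum_univ_ite_val_add_one_eq [AddCommMonoid R] (m : ℕ) (c : R) :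
    ∑ i : Fin N, (if (i : ℕ) + 1 = m then c else 0) = if 1 ≤ m ∧ m ≤ N then c else 0 := by
  rw [Fin.sum_univ_eq_sum_range (fun i => if i + 1 = m then c else 0)]
  cases m with
  | zero => simp
  | succ m => simp [sum_ite_eq']

/- Column `j` sends mass to `j - 1` at rate `r (2 * j)` and to `j + 1` at rate `r (2 * j + 1)`;
`r 0` and `r (2 * N - 1)` enter only the diagonal entries of the two end columns. -/
def tridiagGenerator [Ring R] (N : ℕ) (r : ℕ → R) : Matrix (Fin N) (Fin N) R :=
  of fun i j =>
    if (i : ℕ) = (j : ℕ) then -(r (2 * (j : ℕ)) + r (2 * (j : ℕ) + 1))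
    else if (i : ℕ) = (j : ℕ) + 1 then r (2 * (j : ℕ) + 1)
    else if (i : ℕ) + 1 = (j : ℕ) then r (2 * (j : ℕ))
    else 0

theorem tridiagGenerator_sum_col [Ring R] {r : ℕ → R} (h0 : r 0 = 0) (htop : r (2 * N - 1) = 0)
    (j : Fin N) : ∑ i, tridiagGenerator N r i j = 0 := by
  have hsplit : ∀ i : Fin N, tridiagGenerator N r i j =
      (if (i : ℕ) = j then -(r (2 * j) + r (2 * j + 1)) else 0) +
      (if (i : ℕ) = j + 1 then r (2 * j + 1) else 0) +
      (if (i : ℕ) + 1 = j then r (2 * j) else 0) := by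
    intro i
    simp only [tridiagGenerator, of_apply]
    split_ifs <;> first | omega | abel
  simp only [hsplit, sum_add_distrib, Fin.sum_univ_ite_val_eq, Fin.sum_univ_ite_val_add_one_eq]
  have hj := j.isLt
  -- at the two ends the missing off-diagonal entry is matched by `r 0 = 0` or `r (2 * N - 1) = 0`
  split_ifs <;> grind

theorem tridiagGenerator_eq_zero [Ring R] {r : ℕ → R} {i j : Fin N}
    (h : (j : ℕ) + 1 < i ∨ (i : ℕ) + 1 < j) : tridiagGenerator N r i j = 0 := by
  simp only [tridiagGenerator, of_apply]
  split_ifs <;> first | omega | rfl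

section OrderedRing

variable [Ring R] [PartialOrder R] {r : ℕ → R} {α β : R}

theorem le_tridiagGenerator_of_ne (hrα : ∀ i, 1 ≤ i → i ≤ 2 * N - 2 → α ≤ r i) {i j : Fin N}
    (hij : i ≠ j) (hi : (i : ℕ) ≤ j + 1) (hj : (j : ℕ) ≤ i + 1) : α ≤ tridiagGenerator N r i j := by
  have hne : (i : ℕ) ≠ j := Fin.val_ne_of_ne hij
  have := i.isLt
  simp only [tridiagGenerator, of_apply, if_neg hne]
  split_ifs <;> first | omega | exact hrα _ (by omega) (by omega)

theorem tridiagGenerator_nonneg_of_ne (hα : 0 ≤ α)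
    (hrα : ∀ i, 1 ≤ i → i ≤ 2 * N - 2 → α ≤ r i) {i j : Fin N} (hij : i ≠ j) :
    0 ≤ tridiagGenerator N r i j := by
  by_cases hband : (i : ℕ) ≤ j + 1 ∧ (j : ℕ) ≤ i + 1
  · exact hα.trans (le_tridiagGenerator_of_ne hrα hij hband.1 hband.2)
  · rw [tridiagGenerator_eq_zero (by omega)]

theorem neg_two_mul_le_tridiagGenerator_self [IsOrderedRing R] (hβ : 0 ≤ β) (h0 : r 0 = 0)
    (htop : r (2 * N - 1) = 0) (hrβ : ∀ i, 1 ≤ i → i ≤ 2 * N - 2 → r i ≤ β) (j : Fin N) :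
    -(2 * β) ≤ tridiagGenerator N r j j := by
  have hle : ∀ i ≤ 2 * N - 1, r i ≤ β := by
    intro i hi
    rcases Nat.eq_zero_or_pos i with rfl | hi0
    · rwa [h0]
    rcases hi.eq_or_lt with rfl | hilt
    · rwa [htop]
    · exact hrβ i hi0 (by omega)
  have := j.isLt
  simp only [tridiagGenerator, of_apply]
  rw [two_mul]
  exact neg_le_neg (add_le_add (hle (2 * j) (by omega)) (hle (2 * j + 1) (by omega)))

end OrderedRing

end Tridiagonal

section EulerStep

variable {R : Type*} [CommRing R] [PartialOrder R] [IsOrderedRing R] {N : ℕ} {r : ℕ → R}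
  {α β Δ : R}

theorem one_sub_le_one_add_mul_tridiagGenerator_self (hΔ : 0 ≤ Δ) (hβ : 0 ≤ β) (h0 : r 0 = 0)
    (htop : r (2 * N - 1) = 0) (hrβ : ∀ i, 1 ≤ i → i ≤ 2 * N - 2 → r i ≤ β) (j : Fin N) :
    1 - 2 * Δ * β ≤ 1 + Δ * tridiagGenerator N r j j :=
  calc 1 - 2 * Δ * β = 1 + Δ * -(2 * β) := by ring
    _ ≤ 1 + Δ * tridiagGenerator N r j j := add_le_add_right
      (mul_le_mul_of_nonneg_left (neg_two_mul_le_tridiagGenerator_self hβ h0 htop hrβ j) hΔ) 1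

theorem one_add_smul_tridiagGenerator_mem_colStochastic (hΔ : 0 ≤ Δ) (hα : 0 ≤ α) (hβ : 0 ≤ β)
    (hΔβ : 2 * Δ * β ≤ 1) (h0 : r 0 = 0) (htop : r (2 * N - 1) = 0)
    (hrα : ∀ i, 1 ≤ i → i ≤ 2 * N - 2 → α ≤ r i) (hrβ : ∀ i, 1 ≤ i → i ≤ 2 * N - 2 → r i ≤ β) :
    1 + Δ • tridiagGenerator N r ∈ colStochastic R (Fin N) :=
  one_add_smul_mem_colStochastic hΔ (fun _ _ hij => tridiagGenerator_nonneg_of_ne hα hrα hij)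
    (fun j => (sub_nonneg.2 hΔβ).trans
      (one_sub_le_one_add_mul_tridiagGenerator_self hΔ hβ h0 htop hrβ j))
    (tridiagGenerator_sum_col h0 htop)

theorem bandBoundedBelow_one_add_smul_tridiagGenerator {γ : R} (hΔ : 0 ≤ Δ) (hβ : 0 ≤ β)
    (hγα : γ ≤ Δ * α) (hγβ : γ ≤ 1 - 2 * Δ * β) (h0 : r 0 = 0) (htop : r (2 * N - 1) = 0)
    (hrα : ∀ i, 1 ≤ i → i ≤ 2 * N - 2 → α ≤ r i) (hrβ : ∀ i, 1 ≤ i → i ≤ 2 * N - 2 → r i ≤ β) :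
    BandBoundedBelow (1 + Δ • tridiagGenerator N r) 1 γ := by
  intro i j hi hj
  rw [Matrix.add_apply, Matrix.smul_apply, smul_eq_mul]
  rcases eq_or_ne i j with rfl | hij
  · rw [one_apply_eq]
    exact hγβ.trans (one_sub_le_one_add_mul_tridiagGenerator_self hΔ hβ h0 htop hrβ i)
  · rw [one_apply_ne hij, zero_add]
    exact hγα.trans (mul_le_mul_of_nonneg_left (le_tridiagGenerator_of_ne hrα hij hi hj) hΔ)

end EulerStep

theorem product_of_transition_matrices_positive_general
    (N : ℕ) (q : ℕ → ℕ → ℝ) (α β Δ γ : ℝ)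
    (hα : 0 < α) (hΔpos : 0 < Δ) (hΔ : Δ < 1 / (2 * β))
    (hγ : γ = min (Δ * α) (1 - 2 * Δ * β))
    (hq0 : ∀ k, q k 0 = 0) (hqtop : ∀ k, q k (2 * N - 1) = 0)
    (hqα : ∀ k, ∀ i : ℕ, 1 ≤ i → i ≤ 2 * N - 2 → α ≤ q k i)
    (hqβ : ∀ k, ∀ i : ℕ, 1 ≤ i → i ≤ 2 * N - 2 → q k i ≤ β)
    (Q : ℕ → Matrix (Fin N) (Fin N) ℝ)
    (hQ : ∀ k, ∀ i j : Fin N, Q k i j =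
      if (i : ℕ) = (j : ℕ) then -(q k (2 * (j : ℕ)) + q k (2 * (j : ℕ) + 1))
      else if (i : ℕ) = (j : ℕ) + 1 then q k (2 * (j : ℕ) + 1)
      else if (i : ℕ) + 1 = (j : ℕ) then q k (2 * (j : ℕ))
      else 0)
    (L : ℕ → Matrix (Fin N) (Fin N) ℝ)
    (hL : ∀ k, L k = (1 : Matrix (Fin N) (Fin N) ℝ) + Δ • Q k)
    (P : Matrix (Fin N) (Fin N) ℝ)
    (hP : P = (List.ofFn (fun k : Fin (N - 1) => L (N - 2 - (k : ℕ)))).prod) :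
    (∀ i j, γ ^ (N - 1) ≤ P i j) ∧
    (∀ p : Fin N → ℝ, (∑ j, p j = 1 ∧ ∀ j, 0 ≤ p j) →
      (∑ j, P.mulVec p j = 1 ∧ ∀ j, γ ^ (N - 1) ≤ P.mulVec p j)) := by
  have hβ : 0 < β := by linarith [one_div_pos.mp (hΔpos.trans hΔ)]
  have hΔβ : 2 * Δ * β < 1 := by rw [lt_div_iff₀ (by positivity)] at hΔ; linarith
  have hγα : γ ≤ Δ * α := hγ ▸ min_le_left _ _
  have hγβ : γ ≤ 1 - 2 * Δ * β := hγ ▸ min_le_right _ _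
  have hγ0 : 0 ≤ γ := hγ ▸ le_min (by positivity) (by linarith)
  have hLk : ∀ k, L k ∈ colStochastic ℝ (Fin N) ∧ BandBoundedBelow (L k) 1 γ := by
    intro k
    rw [hL, show Q k = tridiagGenerator N (q k) from Matrix.ext (hQ k)]
    exact ⟨one_add_smul_tridiagGenerator_mem_colStochastic hΔpos.le hα.le hβ.le hΔβ.le
        (hq0 k) (hqtop k) (hqα k) (hqβ k),
      bandBoundedBelow_one_add_smul_tridiagGenerator hΔpos.le hβ.le hγα hγβ
        (hq0 k) (hqtop k) (hqα k) (hqβ k)⟩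
  have hLs : ∀ A ∈ List.ofFn (fun k : Fin (N - 1) => L (N - 2 - (k : ℕ))),
      A ∈ colStochastic ℝ (Fin N) ∧ BandBoundedBelow A 1 γ :=
    List.forall_mem_ofFn_iff.2 fun k => hLk _
  have hPstoch : P ∈ colStochastic ℝ (Fin N) :=
    hP ▸ Submonoid.list_prod_mem _ fun A hA => (hLs A hA).1
  have hPband : BandBoundedBelow P (N - 1) (γ ^ (N - 1)) := by
    have := BandBoundedBelow.list_prod hγ0 fun A hA => ⟨(hLs A hA).1.1, (hLs A hA).2⟩
    rwa [List.length_ofFn, ← hP] at this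
  exact ⟨hPband.le_apply, fun p ⟨hp1, hp0⟩ =>
    ⟨(sum_mulVec_of_mem_colStochastic hPstoch).trans hp1,
      fun _ => le_mulVec_apply (hPband.le_apply _) hp0 hp1⟩⟩

/-- Given tridiagonal generators `Q k` with band entries
`q k i ∈ [α, β]` (`α > 0`), `0 < Δ < 1/(2β)` and
`γ = min (Δα) (1 - 2Δβ) > 0`, the product `L_{N-2} ⋯ L_1 L_0` of the `N-1`
matrices `L k = I + Δ • Q k` has every entry at least `γ^{N-1}`; in
particular it maps the probability simplex `Σ_N` into
`Σ_N(γ) = {p ∈ Σ_N : pᵢ ≥ γ^{N-1}}`. -/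
theorem product_of_transition_matrices_positive
    (N : ℕ) (hN : 2 ≤ N) (q : ℕ → ℕ → ℝ) (α β Δ γ : ℝ)
    (hα : 0 < α) (hαβ : α ≤ β) (hΔpos : 0 < Δ) (hΔ : Δ < 1 / (2 * β))
    (hγ : γ = min (Δ * α) (1 - 2 * Δ * β))
    (hq0 : ∀ k, q k 0 = 0) (hqtop : ∀ k, q k (2 * N - 1) = 0)
    (hqα : ∀ k, ∀ i : ℕ, 1 ≤ i → i ≤ 2 * N - 2 → α ≤ q k i)
    (hqβ : ∀ k, ∀ i : ℕ, 1 ≤ i → i ≤ 2 * N - 2 → q k i ≤ β)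
    (Q : ℕ → Matrix (Fin N) (Fin N) ℝ)
    (hQ : ∀ k, ∀ i j : Fin N, Q k i j =
      if (i : ℕ) = (j : ℕ) then -(q k (2 * (j : ℕ)) + q k (2 * (j : ℕ) + 1))
      else if (i : ℕ) = (j : ℕ) + 1 then q k (2 * (j : ℕ) + 1)
      else if (i : ℕ) + 1 = (j : ℕ) then q k (2 * (j : ℕ))
      else 0)
    (L : ℕ → Matrix (Fin N) (Fin N) ℝ)
    (hL : ∀ k, L k = (1 : Matrix (Fin N) (Fin N) ℝ) + Δ • Q k)
    (P : Matrix (Fin N) (Fin N) ℝ)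
    (hP : P = (List.ofFn (fun k : Fin (N - 1) => L (N - 2 - (k : ℕ)))).prod) :
    (∀ i j, γ ^ (N - 1) ≤ P i j) ∧
    (∀ p : Fin N → ℝ, (∑ j, p j = 1 ∧ ∀ j, 0 ≤ p j) →
      (∑ j, P.mulVec p j = 1 ∧ ∀ j, γ ^ (N - 1) ≤ P.mulVec p j)) :=
  product_of_transition_matrices_positive_general N q α β Δ γ hα hΔpos hΔ hγ hq0 hqtop hqα hqβ Q hQ
    L hL P hP
end
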